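/- Arbitrary positive announcements have the Church–Rosser property on S5: for every φ ∈ L_PAPAL, the formula ◊⁺□⁺φ → □⁺◊⁺φ is valid on S5. -/

import Mathlib

/-- An epistemic (S5) model: a nonempty set of states, an equivalence
relation for each agent, and a valuation of atoms. -/
structure EpiModel (A P : Type) where
  S : Type
  ne : Nonempty S
  rel : A → S → S → Prop
  equiv : ∀ a, Equivalence (rel a)
  val : P → Set S

/-- Positive formulas L_EL⁺ : p | ¬p | ∧ | ∨ | K_a. -/
inductive PosForm (A P : Type) where
  | atom : P → PosForm A P
  | natom : P → PosForm A P
  | and : PosForm A P → PosForm A P → PosForm A P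
  | or : PosForm A P → PosForm A P → PosForm A P
  | know : A → PosForm A P → PosForm A P

/-- Satisfaction of a positive formula, relativized to a current domain `D`
(representing the submodel of `M` induced by `D`). -/
def PosForm.sat {A P : Type} (M : EpiModel A P) : PosForm A P → Set M.S → M.S → Prop
  | .atom p, _, s => s ∈ M.val p
  | .natom p, _, s => s ∉ M.val p
  | .and φ ψ, D, s => PosForm.sat M φ D s ∧ PosForm.sat M ψ D s
  | .or φ ψ, D, s => PosForm.sat M φ D s ∨ PosForm.sat M ψ D s
  | .know a φ, D, s => ∀ t, M.rel a s t → t ∈ D → PosForm.sat M φ D t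

/-- The language L_PAPAL : atoms, ¬, ∧, K_a, announcements [ψ]φ and the
positive arbitrary-announcement quantifier □⁺. -/
inductive Form (A P : Type) where
  | atom : P → Form A P
  | neg : Form A P → Form A P
  | and : Form A P → Form A P → Form A P
  | know : A → Form A P → Form A P
  | ann : Form A P → Form A P → Form A P
  | pbox : Form A P → Form A P

/-- Satisfaction, relativized to a current domain `D`: `Form.sat M φ D s`
means that φ holds at state `s` of the restriction of `M` to `D`.
Announcement `[ψ]φ` further restricts the domain to the states of `D`
satisfying ψ; `□⁺φ` quantifies over announcements of positive formulas. -/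
def Form.sat {A P : Type} (M : EpiModel A P) : Form A P → Set M.S → M.S → Prop
  | .atom p, _, s => s ∈ M.val p
  | .neg φ, D, s => ¬ Form.sat M φ D s
  | .and φ ψ, D, s => Form.sat M φ D s ∧ Form.sat M ψ D s
  | .know a φ, D, s => ∀ t, M.rel a s t → t ∈ D → Form.sat M φ D t
  | .ann ψ φ, D, s => Form.sat M ψ D s → Form.sat M φ {t | t ∈ D ∧ Form.sat M ψ D t} s
  | .pbox φ, D, s => ∀ χ : PosForm A P, PosForm.sat M χ D s →
      Form.sat M φ {t | t ∈ D ∧ PosForm.sat M χ D t} s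

/-- Truth at a pointed model `M_s`. -/
def Sat {A P : Type} (M : EpiModel A P) (s : M.S) (φ : Form A P) : Prop :=
  Form.sat M φ Set.univ s

def Form.or {A P : Type} (φ ψ : Form A P) : Form A P := .neg (.and (.neg φ) (.neg ψ))
def Form.imp {A P : Type} (φ ψ : Form A P) : Form A P := Form.or (.neg φ) ψ
def Form.iff {A P : Type} (φ ψ : Form A P) : Form A P := .and (Form.imp φ ψ) (Form.imp ψ φ)
def Form.pdia {A P : Type} (φ : Form A P) : Form A P := .neg (.pbox (.neg φ))
def Form.lknow {A P : Type} (a : A) (φ : Form A P) : Form A P := .neg (.know a (.neg φ))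

/-- Validity on the class S5 of all epistemic models. -/
def Valid (A P : Type) (φ : Form A P) : Prop :=
  ∀ (M : EpiModel A P) (s : M.S), Sat M s φ

/-!
Announcing the conjunction of the literals true at `s` over the atoms of `φ` cuts any domain
containing `s` down to states that agree with `s` on those atoms. On such a domain a formula over
those atoms has one truth value at every state, whatever the domain: the relations are reflexive,
so `K_a` adds nothing, and `□⁺` can be witnessed by a literal true at the current state. So if
`□⁺φ` holds after some positive announcement, `φ` holds after this characteristic formula is
announced there, hence also after it is announced following any other positive announcement.
-/

namespace Form

variable {A P : Type}

def atoms : Form A P → List P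
  | .atom p => [p]
  | .neg φ => φ.atoms
  | .and φ ψ => φ.atoms ++ ψ.atoms
  | .know _ φ => φ.atoms
  | .ann ψ φ => ψ.atoms ++ φ.atoms
  | .pbox φ => φ.atoms

end Form

namespace PosForm

variable {A P : Type}

/-- Positive formulas are built from literals, so they exist only when there are atoms. -/
def someAtom : PosForm A P → P
  | .atom p => p
  | .natom p => p
  | .and φ _ => φ.someAtom
  | .or φ _ => φ.someAtom
  | .know _ φ => φ.someAtom

open Classical in
noncomputable def literal (M : EpiModel A P) (s : M.S) (p : P) : PosForm A P :=
  if s ∈ M.val p then .atom p else .natom p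

theorem sat_literal_iff (M : EpiModel A P) (s : M.S) (p : P) (D : Set M.S) (t : M.S) :
    (literal M s p).sat M D t ↔ (t ∈ M.val p ↔ s ∈ M.val p) := by
  unfold literal
  by_cases h : s ∈ M.val p <;> simp [h, PosForm.sat]

noncomputable def charForm (M : EpiModel A P) (s : M.S) (p₀ : P) (l : List P) : PosForm A P :=
  l.foldr (fun q χ => .and (literal M s q) χ) (literal M s p₀)

theorem sat_charForm_iff (M : EpiModel A P) (s : M.S) (p₀ : P) (l : List P) (D : Set M.S)
    (t : M.S) :
    (charForm M s p₀ l).sat M D t ↔ ∀ p ∈ p₀ :: l, (t ∈ M.val p ↔ s ∈ M.val p) := by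
  induction l with
  | nil => simp [charForm, sat_literal_iff]
  | cons q l ih =>
    simp only [charForm, List.foldr_cons] at ih ⊢
    simp only [PosForm.sat, ih, sat_literal_iff, List.forall_mem_cons]
    tauto

theorem sat_charForm_self (M : EpiModel A P) (s : M.S) (p₀ : P) (l : List P) (D : Set M.S) :
    (charForm M s p₀ l).sat M D s := by
  simp [sat_charForm_iff]

end PosForm

section Collapse

variable {A P : Type} (M : EpiModel A P)

def AgreeOn (s : M.S) (V : List P) (U : Set M.S) : Prop :=
  ∀ x ∈ U, ∀ p ∈ V, (x ∈ M.val p ↔ s ∈ M.val p)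

variable {M}

theorem AgreeOn.mono {s : M.S} {V : List P} {U U' : Set M.S} (h : AgreeOn M s V U)
    (hU : U' ⊆ U) : AgreeOn M s V U' :=
  fun x hx => h x (hU hx)

theorem Form.sat_of_agreeOn (p₀ : P) (φ : Form A P) {s : M.S} {V : List P}
    (hφ : ∀ p ∈ φ.atoms, p ∈ V) {U₁ U₂ : Set M.S} (h₁ : AgreeOn M s V U₁)
    (h₂ : AgreeOn M s V U₂) {t u : M.S} (ht : t ∈ U₁) (hu : u ∈ U₂) :
    φ.sat M U₁ t → φ.sat M U₂ u := by
  induction φ generalizing U₁ U₂ t u with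
  | atom p =>
    have hp : p ∈ V := hφ p (by simp [Form.atoms])
    simpa only [Form.sat, h₁ t ht p hp, h₂ u hu p hp] using id
  | neg φ ih =>
    exact fun hφt hφu => hφt (ih hφ h₂ h₁ hu ht hφu)
  | and φ ψ ihφ ihψ =>
    simp only [Form.atoms, List.mem_append] at hφ
    exact fun h => ⟨ihφ (fun p hp => hφ p (.inl hp)) h₁ h₂ ht hu h.1,
      ihψ (fun p hp => hφ p (.inr hp)) h₁ h₂ ht hu h.2⟩
  | know a φ ih =>
    exact fun h u' _ hu' => ih hφ h₁ h₂ ht hu' (h t ((M.equiv a).refl t) ht)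
  | ann ψ φ ihψ ihφ =>
    simp only [Form.atoms, List.mem_append] at hφ
    intro h hψu
    have hψt := ihψ (fun p hp => hφ p (.inl hp)) h₂ h₁ hu ht hψu
    exact ihφ (fun p hp => hφ p (.inr hp)) (h₁.mono (Set.sep_subset _ _))
      (h₂.mono (Set.sep_subset _ _)) ⟨ht, hψt⟩ ⟨hu, hψu⟩ (h hψt)
  | pbox φ ih =>
    intro h χ hχ
    -- On the left, `□⁺` is instantiated with the literal over `p₀` that `t` itself satisfies.
    have hlit := (PosForm.sat_literal_iff M t p₀ U₁ t).mpr Iff.rfl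
    exact ih hφ (h₁.mono (Set.sep_subset _ _)) (h₂.mono (Set.sep_subset _ _)) ⟨ht, hlit⟩ ⟨hu, hχ⟩
      (h _ hlit)

theorem Form.sat_after_charForm (p₀ : P) (φ : Form A P) {s : M.S} {D₁ D₂ : Set M.S}
    (h₁ : s ∈ D₁) (h₂ : s ∈ D₂)
    (h : φ.sat M {t | t ∈ D₁ ∧ (PosForm.charForm M s p₀ φ.atoms).sat M D₁ t} s) :
    φ.sat M {t | t ∈ D₂ ∧ (PosForm.charForm M s p₀ φ.atoms).sat M D₂ t} s := by
  have hagree (D : Set M.S) :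
      AgreeOn M s φ.atoms {t | t ∈ D ∧ (PosForm.charForm M s p₀ φ.atoms).sat M D t} :=
    fun x hx p hp => (PosForm.sat_charForm_iff M s p₀ _ D x).mp hx.2 p (List.mem_cons_of_mem _ hp)
  exact Form.sat_of_agreeOn p₀ φ (fun _ hp => hp) (hagree D₁) (hagree D₂)
    ⟨h₁, PosForm.sat_charForm_self M s p₀ _ D₁⟩ ⟨h₂, PosForm.sat_charForm_self M s p₀ _ D₂⟩ h

end Collapse

/-- Arbitrary positive announcements have the Church–Rosser
property on S5: `◊⁺□⁺φ → □⁺◊⁺φ` is valid for every φ ∈ L_PAPAL. -/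
theorem pbox_church_rosser (A P : Type) (φ : Form A P) :
    Valid A P (Form.imp (Form.pdia (.pbox φ)) (.pbox (Form.pdia φ))) := by
  intro M s
  simp only [Sat, Form.imp, Form.or, Form.pdia, Form.sat, not_and, not_not]
  intro hdiabox η hη hboxneg
  push Not at hdiabox
  obtain ⟨ψ, hψ, hboxφ⟩ := hdiabox
  have hδ := PosForm.sat_charForm_self M s ψ.someAtom φ.atoms
  refine hboxneg _ (hδ _) (Form.sat_after_charForm _ φ ?_ ?_ (hboxφ _ (hδ _)))
  exacts [⟨trivial, hψ⟩, ⟨trivial, hη⟩]
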